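/- Let K be a symmetric n×n matrix with strictly positive entries defined by Kᵢⱼ = exp(-‖vᵢ - vⱼ‖²/(2h²)) for vectors vᵢ ∈ ℝ^d and h > 0. Then there exists a positive diagonal matrix D such that W = DKD is symmetric doubly stochastic. -/
import Mathlib

open Matrix Finset

namespace Stmt16Aux

variable {n : ℕ}

noncomputable def gf (K : Matrix (Fin n) (Fin n) ℝ) (y : Fin n → ℝ) : ℝ :=
  (∑ p, ∑ q, K p q * y p * y q) / 2 - ∑ p, Real.log (y p)

lemma phi_ge {t : ℝ} (ht : 0 < t) : (t - 1) ^ 2 / 2 + 1 / 2 ≤ t ^ 2 / 2 - Real.log t := by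
  have := Real.log_le_sub_one_of_pos ht
  nlinarith

lemma g_lower (K : Matrix (Fin n) (Fin n) ℝ) (hpos : ∀ i j, 0 < K i j)
    (hdiag : ∀ i, K i i = 1) (y : Fin n → ℝ) (hy : ∀ i, 0 < y i) :
    ∑ p, ((y p) ^ 2 / 2 - Real.log (y p)) ≤ gf K y := by
  unfold gf
  rw [Finset.sum_sub_distrib, ← Finset.sum_div]
  have h1 : ∑ p, (y p) ^ 2 ≤ ∑ p, ∑ q, K p q * y p * y q := by
    apply Finset.sum_le_sum
    intro p _
    have h2 : K p p * y p * y p ≤ ∑ q, K p q * y p * y q :=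
      Finset.single_le_sum
        (fun q _ => mul_nonneg (mul_nonneg (hpos p q).le (hy p).le) (hy q).le) (mem_univ p)
    calc (y p) ^ 2 = K p p * y p * y p := by rw [hdiag p]; ring
      _ ≤ _ := h2
  linarith

lemma sinkhorn (K : Matrix (Fin n) (Fin n) ℝ) (hpos : ∀ i j, 0 < K i j)
    (hsym : ∀ i j, K i j = K j i) (hdiag : ∀ i, K i i = 1) :
    ∃ x : Fin n → ℝ, (∀ i, 0 < x i) ∧ ∀ i, x i * ∑ j, K i j * x j = 1 := by
  set c : ℝ := gf K (fun _ => 1) with hc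
  set c'' : ℝ := max (c - ((n - 1 : ℕ) : ℝ) / 2) 1 with hc''def
  have hc''1 : (1 : ℝ) ≤ c'' := le_max_right _ _
  set a : ℝ := Real.exp (-c'') with hadef
  set b : ℝ := 1 + Real.sqrt (2 * c'') with hbdef
  have ha0 : 0 < a := Real.exp_pos _
  have ha1 : a ≤ 1 := Real.exp_le_one_iff.mpr (by linarith)
  have hb1 : (1 : ℝ) ≤ b := by
    have := Real.sqrt_nonneg (2 * c''); simp only [hbdef]; linarith
  set B : Set (Fin n → ℝ) := Set.univ.pi (fun _ => Set.Icc a b) with hBdef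
  have hBc : IsCompact B := isCompact_univ_pi fun _ => isCompact_Icc
  have honesB : (fun _ => (1 : ℝ)) ∈ B := fun i _ => ⟨ha1, hb1⟩
  have hBne : B.Nonempty := ⟨fun _ => 1, honesB⟩
  have hmemB : ∀ {y : Fin n → ℝ}, y ∈ B → ∀ i, 0 < y i := by
    intro y hy i
    exact lt_of_lt_of_le ha0 (hy i (Set.mem_univ i)).1
  have hgc : ContinuousOn (gf K) B := by
    apply ContinuousOn.sub
    · exact ((continuous_finset_sum _ fun p _ => continuous_finset_sum _ fun q _ =>
        (continuous_const.mul (continuous_apply p)).mul (continuous_apply q)).div_const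
          2).continuousOn
    · apply continuousOn_finset_sum
      intro p _
      exact Real.continuousOn_log.comp (continuous_apply p).continuousOn
        (fun y hy => Set.mem_compl_singleton_iff.mpr (hmemB hy p).ne')
  obtain ⟨x, hxB, hxmin⟩ := hBc.exists_isMinOn hBne hgc
  have hx : ∀ i, 0 < x i := hmemB hxB
  have hones : gf K x ≤ c := isMinOn_iff.mp hxmin _ honesB
  -- key: outside B, gf is larger than c
  have key : ∀ y : Fin n → ℝ, (∀ i, 0 < y i) → y ∉ B → c < gf K y := by
    intro y hy hyB
    have hex : ∃ i, y i < a ∨ b < y i := by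
      by_contra hcon
      push_neg at hcon
      exact hyB (fun i _ => ⟨(hcon i).1, (hcon i).2⟩)
    obtain ⟨i, hi⟩ := hex
    have hphi : c'' < (y i) ^ 2 / 2 - Real.log (y i) := by
      rcases hi with hlt | hgt
      · have hlog : Real.log (y i) < Real.log a := Real.log_lt_log (hy i) hlt
        rw [hadef, Real.log_exp] at hlog
        nlinarith [sq_nonneg (y i)]
      · have hs : Real.sqrt (2 * c'') < y i - 1 := by simp only [hbdef] at hgt; linarith
        have hsq : Real.sqrt (2 * c'') ^ 2 = 2 * c'' := Real.sq_sqrt (by linarith)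
        have := phi_ge (hy i)
        nlinarith [Real.sqrt_nonneg (2 * c'')]
    have hrest : (({i}ᶜ : Finset (Fin n)).card : ℝ) * (1 / 2)
        ≤ ∑ p ∈ ({i}ᶜ : Finset (Fin n)), ((y p) ^ 2 / 2 - Real.log (y p)) := by
      have := Finset.card_nsmul_le_sum ({i}ᶜ : Finset (Fin n))
        (fun p => (y p) ^ 2 / 2 - Real.log (y p)) (1 / 2)
        (fun p _ => by have := phi_ge (hy p); nlinarith [sq_nonneg (y p - 1)])
      simpa [nsmul_eq_mul] using this
    have hcard : (({i}ᶜ : Finset (Fin n)).card : ℝ) = ((n - 1 : ℕ) : ℝ) := by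
      norm_cast
      simp [Finset.card_compl]
    have hsum : ∑ p, ((y p) ^ 2 / 2 - Real.log (y p))
        = ((y i) ^ 2 / 2 - Real.log (y i))
          + ∑ p ∈ ({i}ᶜ : Finset (Fin n)), ((y p) ^ 2 / 2 - Real.log (y p)) :=
      Fintype.sum_eq_add_sum_compl i _
    have hglow := g_lower K hpos hdiag y hy
    have hcmax : c - ((n - 1 : ℕ) : ℝ) / 2 ≤ c'' := le_max_left _ _
    rw [hcard] at hrest
    calc c ≤ c'' + ((n - 1 : ℕ) : ℝ) / 2 := by linarith
      _ < ((y i) ^ 2 / 2 - Real.log (y i))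
            + ∑ p ∈ ({i}ᶜ : Finset (Fin n)), ((y p) ^ 2 / 2 - Real.log (y p)) := by linarith
      _ = ∑ p, ((y p) ^ 2 / 2 - Real.log (y p)) := hsum.symm
      _ ≤ gf K y := hglow
  -- x is a local min of gf on the whole positive orthant
  have hSopen : IsOpen {y : Fin n → ℝ | ∀ i, 0 < y i} := by
    have : {y : Fin n → ℝ | ∀ i, 0 < y i} = Set.univ.pi (fun _ => Set.Ioi (0 : ℝ)) := by
      ext y; simp [Set.mem_pi]
    rw [this]
    exact isOpen_set_pi Set.finite_univ fun _ _ => isOpen_Ioi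
  have hminS : IsMinOn (gf K) {y | ∀ i, 0 < y i} x := by
    apply isMinOn_iff.mpr
    intro y hy
    by_cases hyB : y ∈ B
    · exact isMinOn_iff.mp hxmin _ hyB
    · exact le_of_lt (lt_of_le_of_lt hones (key y hy hyB))
  have hloc : IsLocalMin (gf K) x := hminS.isLocalMin (hSopen.mem_nhds (fun i => hx i))
  refine ⟨x, hx, fun i => ?_⟩
  -- stationarity in coordinate i
  set A : ℝ := ∑ q ∈ ({i}ᶜ : Finset (Fin n)), K i q * x q with hAdef
  set CC : ℝ := ∑ p ∈ ({i}ᶜ : Finset (Fin n)), ∑ q ∈ ({i}ᶜ : Finset (Fin n)),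
    K p q * x p * x q with hCCdef
  set L : ℝ := ∑ p ∈ ({i}ᶜ : Finset (Fin n)), Real.log (x p) with hLdef
  have hup : ∀ t : ℝ, ∀ p ∈ ({i}ᶜ : Finset (Fin n)), Function.update x i t p = x p := by
    intro t p hp
    exact Function.update_of_ne (by simpa using hp) _ _
  have hpsi : ∀ t : ℝ, gf K (Function.update x i t)
      = (K i i * t ^ 2 + 2 * A * t + CC) / 2 - Real.log t - L := by
    intro t
    unfold gf
    have e1 : ∑ p, Real.log (Function.update x i t p) = Real.log t + L := by
      rw [Fintype.sum_eq_add_sum_compl i, Function.update_self]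
      congr 1
      exact Finset.sum_congr rfl fun p hp => by rw [hup t p hp]
    have e3 : (∑ q, K i q * Function.update x i t i * Function.update x i t q)
        = K i i * t * t + t * A := by
      rw [Fintype.sum_eq_add_sum_compl i]
      simp only [Function.update_self]
      congr 1
      rw [hAdef, Finset.mul_sum]
      exact Finset.sum_congr rfl fun q hq => by rw [hup t q hq]; ring
    have einner : ∀ p ∈ ({i}ᶜ : Finset (Fin n)),
        (∑ q, K p q * Function.update x i t p * Function.update x i t q)
          = K i p * x p * t + ∑ q ∈ ({i}ᶜ : Finset (Fin n)), K p q * x p * x q := by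
      intro p hp
      rw [Fintype.sum_eq_add_sum_compl i]
      simp only [Function.update_self, hup t p hp]
      congr 1
      · rw [hsym p i]
      · exact Finset.sum_congr rfl fun q hq => by rw [hup t q hq]
    have e4 : ∑ p ∈ ({i}ᶜ : Finset (Fin n)), K i p * x p * t = A * t := by
      rw [hAdef, Finset.sum_mul]
    have e2 : (∑ p, ∑ q, K p q * Function.update x i t p * Function.update x i t q)
        = K i i * t ^ 2 + 2 * A * t + CC := by
      rw [Fintype.sum_eq_add_sum_compl i, e3, Finset.sum_congr rfl einner,
        Finset.sum_add_distrib, e4, ← hCCdef]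
      ring
    rw [e1, e2]
    ring
  -- derivative of the one-variable function
  have hcontu : Continuous fun t : ℝ => Function.update x i t := by
    apply continuous_pi
    intro j
    by_cases hj : j = i
    · subst hj
      simp only [Function.update_self]
      exact continuous_id
    · simp only [Function.update_of_ne hj]
      exact continuous_const
  have htend : Filter.Tendsto (fun t : ℝ => Function.update x i t) (nhds (x i)) (nhds x) := by
    have := (hcontu.tendsto (x i))
    rwa [Function.update_eq_self] at this
  have hloc1 : IsLocalMin (fun t : ℝ => gf K (Function.update x i t)) (x i) := by
    have h1 : ∀ᶠ y in nhds x, gf K x ≤ gf K y := hloc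
    have h2 := htend.eventually h1
    have h3 : gf K (Function.update x i (x i)) = gf K x := by rw [Function.update_eq_self]
    exact h2.mono fun t ht => by simpa [h3] using ht
  have hloc2 : IsLocalMin
      (fun t : ℝ => (K i i * t ^ 2 + 2 * A * t + CC) / 2 - Real.log t - L) (x i) := by
    have : (fun t : ℝ => gf K (Function.update x i t))
        = fun t : ℝ => (K i i * t ^ 2 + 2 * A * t + CC) / 2 - Real.log t - L :=
      funext hpsi
    rwa [this] at hloc1
  have hd : HasDerivAt
      (fun t : ℝ => (K i i * t ^ 2 + 2 * A * t + CC) / 2 - Real.log t - L)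
      ((K i i * (2 * x i) + 2 * A) / 2 - (x i)⁻¹) (x i) := by
    have hp : HasDerivAt (fun t : ℝ => t ^ 2) (2 * x i) (x i) := by
      simpa using hasDerivAt_pow 2 (x i)
    have h1 : HasDerivAt (fun t : ℝ => K i i * t ^ 2 + 2 * A * t + CC)
        (K i i * (2 * x i) + 2 * A) (x i) := by
      have := ((hp.const_mul (K i i)).add ((hasDerivAt_id (x i)).const_mul (2 * A))).add_const CC
      simpa using this
    exact ((h1.div_const 2).sub (Real.hasDerivAt_log (hx i).ne')).sub_const L
  have h0 : (K i i * (2 * x i) + 2 * A) / 2 - (x i)⁻¹ = 0 := by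
    rw [← hd.deriv]
    exact hloc2.deriv_eq_zero
  have hA1 : K i i * x i + A = (x i)⁻¹ := by linarith
  rw [Fintype.sum_eq_add_sum_compl i (fun q => K i q * x q), ← hAdef, hA1]
  exact mul_inv_cancel₀ (hx i).ne'

end Stmt16Aux

/-- symmetric Sinkhorn–Knopp for the Gaussian kernel: for K with
Kᵢⱼ = exp(-‖vᵢ-vⱼ‖²/(2h²)) there is a positive diagonal D such that W = DKD is
symmetric doubly stochastic. -/
theorem stmt16 {n d : ℕ} (v : Fin n → EuclideanSpace ℝ (Fin d)) (h : ℝ) (hh : 0 < h)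
    (K : Matrix (Fin n) (Fin n) ℝ)
    (hK : ∀ i j, K i j = Real.exp (-(‖v i - v j‖ ^ 2) / (2 * h ^ 2))) :
    ∃ D : Matrix (Fin n) (Fin n) ℝ, D.IsDiag ∧ (∀ i, 0 < D i i) ∧
      (D * K * D)ᵀ = D * K * D ∧
      (∀ i j, 0 ≤ (D * K * D) i j) ∧
      (∀ i, ∑ j, (D * K * D) i j = 1) ∧
      (∀ j, ∑ i, (D * K * D) i j = 1) := by
  have hsym : ∀ i j, K i j = K j i := fun i j => by rw [hK, hK, norm_sub_rev]
  have hpos : ∀ i j, 0 < K i j := fun i j => by rw [hK]; exact Real.exp_pos _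
  have hdiag : ∀ i, K i i = 1 := fun i => by rw [hK]; simp
  obtain ⟨x, hx, hrow⟩ := Stmt16Aux.sinkhorn K hpos hsym hdiag
  have hent : ∀ i j, (Matrix.diagonal x * K * Matrix.diagonal x) i j = x i * K i j * x j := by
    intro i j
    rw [Matrix.mul_diagonal, Matrix.diagonal_mul]
  have hrow' : ∀ i, ∑ j, (Matrix.diagonal x * K * Matrix.diagonal x) i j = 1 := by
    intro i
    simp only [hent]
    calc ∑ j, x i * K i j * x j = x i * ∑ j, K i j * x j := by
          rw [Finset.mul_sum]
          exact Finset.sum_congr rfl fun j _ => by ring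
      _ = 1 := hrow i
  have htr : (Matrix.diagonal x * K * Matrix.diagonal x)ᵀ
      = Matrix.diagonal x * K * Matrix.diagonal x := by
    ext i j
    rw [Matrix.transpose_apply, hent, hent, hsym i j]
    ring
  refine ⟨Matrix.diagonal x, Matrix.isDiag_diagonal x, fun i => by simpa using hx i,
    htr, ?_, hrow', ?_⟩
  · intro i j
    rw [hent]
    exact le_of_lt (mul_pos (mul_pos (hx i) (hpos i j)) (hx j))
  · intro j
    calc ∑ i, (Matrix.diagonal x * K * Matrix.diagonal x) i j
        = ∑ i, (Matrix.diagonal x * K * Matrix.diagonal x) j i := by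
          exact Finset.sum_congr rfl fun i _ => by rw [hent, hent, hsym i j]; ring
      _ = 1 := hrow' j
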